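/- arXiv:1102.2789 — 7 statements merged into one kernel-verified Lean document; each statement's English description precedes it below -/
import Mathlib

section
/- Let K be a field and f1,…,fm ∈ K[x1,…,xn] be such that exactly m−1 of them are algebraically independent (i.e., the transcendence degree of {f1,…,fm} equals m−1). Then the ideal I ⊆ K[y1,…,ym] of all algebraic relations among f1,…,fm (the kernel of the evaluation map yi ↦ fi) is a principal ideal. -/
/-!
If `f` itself is algebraically independent the relation ideal is zero. Otherwise some `f j` can be
dropped so that the remaining `f i` are algebraically independent. Writing `K[y] = A[y_j]` with
`A = K[y_i : i ≠ j]`, the relation ideal becomes a nonzero prime of `A[y_j]` meeting `A` only in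
`0`. Inverting `A \ {0}` turns it into a prime of the principal ideal domain `Frac(A)[y_j]`
without changing its height, so it has height one, and height-one primes of the unique
factorization domain `K[y]` are principal.
-/

open MvPolynomial

noncomputable def trdeg (K : Type*) {A : Type*} [CommRing K] [CommRing A] [Algebra K A]
    {m : ℕ} (f : Fin m → A) : ℕ :=
  sSup {r | ∃ s : Finset (Fin m), s.card = r ∧
    AlgebraicIndependent K (fun i : ↥s => f i.1)}

open Polynomial in
attribute [local instance] Polynomial.algebra Polynomial.isLocalization in
theorem Polynomial.height_eq_one_of_comap_C_eq_bot {A : Type*} [CommRing A] [IsDomain A]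
    (Q : Ideal A[X]) [Q.IsPrime] (hQ0 : Q ≠ ⊥) (hQ : Q.comap C = ⊥) : Q.height = 1 := by
  refine le_antisymm ?_ (Order.one_le_iff_pos.mpr (pos_iff_ne_zero.mpr ?_))
  · have hdisj : Disjoint ((nonZeroDivisors A).map C : Set A[X]) Q := by
      refine Set.disjoint_left.mpr fun _ ⟨a, ha, haC⟩ haQ ↦
        nonZeroDivisors.coe_ne_zero ⟨a, ha⟩ ?_
      rw [← Ideal.mem_bot, ← hQ, Ideal.mem_comap]
      exact haC ▸ haQ
    rw [← IsLocalization.height_map_of_disjoint _ (S := (FractionRing A)[X]) Q hdisj]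
    have := IsLocalization.isPrime_of_isPrime_disjoint _ (FractionRing A)[X] Q ‹_› hdisj
    have hdim : ringKrullDim (FractionRing A)[X] ≤ 1 := by
      rw [← Nat.cast_one, ← Ring.krullDimLE_iff]; infer_instance
    exact_mod_cast (Ideal.height_le_ringKrullDim_of_ne_top this.ne_top).trans hdim
  · rwa [Ne, Ideal.height_eq_zero_iff_eq_bot]

namespace MvPolynomial

variable {σ R A : Type*} [CommRing R] [CommRing A] [Algebra R A]

variable (R) in
noncomputable def equivPolynomialSubtypeNe [DecidableEq σ] (j : σ) :
    MvPolynomial σ R ≃ₐ[R] Polynomial (MvPolynomial {i // i ≠ j} R) :=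
  (renameEquiv R (Equiv.optionSubtypeNe j).symm).trans (optionEquivLeft R _)

theorem aeval_equivPolynomialSubtypeNe_symm_C [DecidableEq σ] (f : σ → A) (j : σ)
    (p : MvPolynomial {i // i ≠ j} R) :
    aeval f ((equivPolynomialSubtypeNe R j).symm (Polynomial.C p)) =
      aeval (fun i : {i // i ≠ j} ↦ f i) p := by
  induction p using MvPolynomial.induction_on with
  | C r => simp [equivPolynomialSubtypeNe]
  | add p q hp hq => simp [hp, hq]
  | mul_X p i hp =>
    rw [Polynomial.C_mul, map_mul, map_mul, hp]
    simp [equivPolynomialSubtypeNe]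

theorem height_ker_aeval_eq_one [IsDomain R] [IsDomain A] (f : σ → A) (j : σ)
    (hind : AlgebraicIndependent R fun i : {i // i ≠ j} ↦ f i)
    (hdep : ¬AlgebraicIndependent R f) : (RingHom.ker (aeval (R := R) f)).height = 1 := by
  classical
  let e := equivPolynomialSubtypeNe R j
  let Q := RingHom.ker ((aeval f).comp e.symm.toAlgHom)
  have hker : RingHom.ker (aeval (R := R) f) = Q.comap e.toRingEquiv := by
    ext p; simp [Q]
  have hQ0 : Q ≠ ⊥ := fun hQ ↦ hdep <| by
    have := ((RingHom.injective_iff_ker_eq_bot _).mpr hQ).comp e.injective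
    simpa [Function.comp_def, AlgebraicIndependent] using this
  have hQC : Q.comap Polynomial.C = ⊥ := by
    ext p
    simp [Q, e, aeval_equivPolynomialSubtypeNe_symm_C, map_eq_zero_iff _ hind]
  have : Q.IsPrime := RingHom.ker_isPrime _
  rw [hker, RingEquiv.height_comap, Polynomial.height_eq_one_of_comap_C_eq_bot Q hQ0 hQC]

end MvPolynomial

section trdeg

variable {K A : Type*} [Field K] [CommRing A] [Nontrivial A] [Algebra K A] {m : ℕ}

theorem exists_card_eq_trdeg (f : Fin m → A) :
    ∃ s : Finset (Fin m), s.card = trdeg K f ∧ AlgebraicIndependent K fun i : s ↦ f i :=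
  Nat.sSup_mem (s := {r | ∃ s : Finset (Fin m), s.card = r ∧
      AlgebraicIndependent K fun i : s ↦ f i})
    ⟨0, ∅, rfl, algebraicIndependent_empty_type⟩
    ⟨m, fun _ ⟨s, hs, _⟩ ↦ hs ▸ (Finset.card_le_univ s).trans_eq (Fintype.card_fin m)⟩

theorem exists_algebraicIndependent_subtype_ne_of_trdeg_eq {f : Fin m → A}
    (h : trdeg K f = m - 1) (hdep : ¬AlgebraicIndependent K f) :
    ∃ j, AlgebraicIndependent K fun i : {i // i ≠ j} ↦ f i.1 := by
  obtain ⟨s, hs, hind⟩ := exists_card_eq_trdeg (K := K) f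
  obtain ⟨j, hj⟩ : ∃ j, j ∉ s := by
    by_contra! hall
    exact hdep (hind.comp (fun i ↦ ⟨i, hall i⟩) fun _ _ hij ↦ congrArg Subtype.val hij)
  have hs_eq : s = Finset.univ.erase j := by
    refine Finset.eq_of_subset_of_card_le (fun i hi ↦ ?_) ?_
    · exact Finset.mem_erase.mpr ⟨fun hij ↦ hj (hij ▸ hi), Finset.mem_univ i⟩
    · simp [hs, h]
  let ι : {i // i ≠ j} → s := fun i ↦
    ⟨i, hs_eq ▸ Finset.mem_erase.mpr ⟨i.2, Finset.mem_univ _⟩⟩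
  exact ⟨j, hind.comp ι fun _ _ hij ↦ Subtype.ext (by simpa [ι] using hij)⟩

end trdeg

theorem relation_ideal_principal_general (K : Type*) [Field K] (n m : ℕ)
    (f : Fin m → MvPolynomial (Fin n) K) (h : trdeg K f = m - 1) :
    (RingHom.ker (MvPolynomial.aeval (R := K) f)).IsPrincipal := by
  by_cases hf : AlgebraicIndependent K f
  · rw [(RingHom.injective_iff_ker_eq_bot _).mp hf]
    exact bot_isPrincipal
  obtain ⟨j, hj⟩ := exists_algebraicIndependent_subtype_ne_of_trdeg_eq h hf
  have := RingHom.ker_isPrime (aeval (R := K) f)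
  exact UniqueFactorizationMonoid.isPrincipal_of_height_eq_one (height_ker_aeval_eq_one f j hj hf)

theorem relation_ideal_principal (K : Type*) [Field K] (n m : ℕ) (hm : 1 ≤ m)
    (f : Fin m → MvPolynomial (Fin n) K) (h : trdeg K f = m - 1) :
    (RingHom.ker (MvPolynomial.aeval (R := K) f)).IsPrincipal :=
  relation_ideal_principal_general K n m f h
end

section
/- Let K be a field, C a polynomial in m variables over K, and f1,…,fm ∈ K[x1,…,xn]. If φ: K[x1,…,xn] → K[z1,…,zr] is a K-algebra homomorphism faithful to {f1,…,fm} (i.e., it preserves the transcendence degree of this set), then C(f1,…,fm) = 0 if and only if C(φ(f1),…,φ(fm)) = 0. -/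
open MvPolynomial

/-!
Pick `s` with `#s = trdeg {φ fᵢ}` and `{φ fᵢ}_{i ∈ s}` algebraically independent. Then
`{fᵢ}_{i ∈ s}` is independent as well, and by faithfulness it is a maximal independent subfamily,
so every `fⱼ`, hence `C(f)`, is algebraic over `B = K[fᵢ : i ∈ s]`, on which `φ` is injective.
A nonzero element algebraic over `B` divides a nonzero element of `B`, so `φ` cannot kill it.
-/

theorem IsAlgebraic.eq_zero_of_map_eq_zero {B R S : Type*} [CommRing B] [CommRing R] [IsDomain R]
    [Semiring S] [Algebra B R] (φ : R →+* S) (hφ : Function.Injective (φ.comp (algebraMap B R)))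
    {u : R} (hu : IsAlgebraic B u) (h : φ u = 0) : u = 0 := by
  by_contra hne
  obtain ⟨b, hb, c, hc⟩ := hu.exists_nonzero_dvd (mem_nonZeroDivisors_of_ne_zero hne)
  exact hb (hφ (by simp [hc, h]))

theorem MvPolynomial.isAlgebraic_aeval {K B R σ : Type*} [CommRing K] [CommRing B] [IsDomain B]
    [CommRing R] [Algebra K B] [Algebra B R] [Algebra K R] [IsScalarTower K B R] {x : σ → R}
    (hx : ∀ i, IsAlgebraic B (x i)) (C : MvPolynomial σ K) : IsAlgebraic B (aeval x C) := by
  induction C using MvPolynomial.induction_on with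
  | C c => simpa [IsScalarTower.algebraMap_apply K B R] using isAlgebraic_algebraMap _
  | add p q hp hq => simpa using hp.add hq
  | mul_X p i hp => simpa using hp.mul (hx i)

theorem AlgebraicIndepOn.injective_comp_algebraMap_adjoin {K A S ι : Type*} [CommRing K]
    [CommRing A] [CommRing S] [Algebra K A] [Algebra K S] (φ : A →ₐ[K] S) {x : ι → A}
    {s : Set ι} (h : AlgebraicIndepOn K (φ ∘ x) s) :
    Function.Injective ((φ : A →+* S).comp (algebraMap (Algebra.adjoin K (x '' s)) A)) := by
  have hx : AlgebraicIndepOn K x s := AlgebraicIndependent.of_comp φ h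
  have hcomp : (φ : A →+* S).comp (algebraMap (Algebra.adjoin K (x '' s)) A) ∘ hx.aevalEquiv =
      aeval fun i : s => φ (x i) := by
    funext p
    exact comp_aeval_apply (f := fun i : s => x i) φ p
  exact Function.Injective.of_comp_right (hcomp ▸ h) hx.aevalEquiv.surjective

section trdeg

variable (K : Type*) {A : Type*} [CommRing K] [CommRing A] [Algebra K A] {m : ℕ} (f : Fin m → A)

theorem le_trdeg {s : Finset (Fin m)} (hs : AlgebraicIndepOn K f s) : s.card ≤ trdeg K f :=
  le_csSup ⟨m, by rintro _ ⟨t, rfl, -⟩; simpa using t.card_le_univ⟩ ⟨s, rfl, hs⟩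

theorem exists_algebraicIndepOn_card_eq_trdeg [FaithfulSMul K A] :
    ∃ s : Finset (Fin m), AlgebraicIndepOn K f s ∧ s.card = trdeg K f := by
  have hempty : AlgebraicIndepOn K f (∅ : Finset (Fin m)) := by
    simpa using FaithfulSMul.algebraMap_injective K A
  obtain ⟨s, hcard, hs⟩ : trdeg K f ∈ _ := Nat.sSup_mem ⟨0, ∅, rfl, hempty⟩
    ⟨m, by rintro _ ⟨t, rfl, -⟩; simpa using t.card_le_univ⟩
  exact ⟨s, hs, hcard⟩

variable {K f}

theorem AlgebraicIndepOn.isAlgebraic_of_card_eq_trdeg [Nontrivial K] {s : Finset (Fin m)}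
    (hs : AlgebraicIndepOn K f s) (hcard : s.card = trdeg K f) (j : Fin m) :
    IsAlgebraic (Algebra.adjoin K (f '' s)) (f j) := by
  have : Nontrivial A := hs.algebraMap_injective.nontrivial
  by_contra hj
  have hins : AlgebraicIndepOn K f (insert j s : Finset (Fin m)) := by
    rw [Finset.coe_insert]
    exact hs.insert hj
  have hj' : j ∉ s := fun hjs => hj <|
    isAlgebraic_algebraMap (⟨f j, Algebra.subset_adjoin ⟨j, hjs, rfl⟩⟩ : Algebra.adjoin K (f '' s))
  have hle := le_trdeg K f hins
  rw [Finset.card_insert_of_notMem hj'] at hle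
  omega

end trdeg

theorem faithful_preserves_nonzeroness (K : Type*) [Field K] (n m r : ℕ)
    (C : MvPolynomial (Fin m) K) (f : Fin m → MvPolynomial (Fin n) K)
    (φ : MvPolynomial (Fin n) K →ₐ[K] MvPolynomial (Fin r) K)
    (hfaithful : trdeg K (fun i => φ (f i)) = trdeg K f) :
    MvPolynomial.aeval f C = 0 ↔ MvPolynomial.aeval (fun i => φ (f i)) C = 0 := by
  refine ⟨fun h => by rw [← comp_aeval_apply, h, map_zero], fun h => ?_⟩
  obtain ⟨s, hs, hcard⟩ := exists_algebraicIndepOn_card_eq_trdeg K (φ ∘ f)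
  have hfs : AlgebraicIndepOn K f s := AlgebraicIndependent.of_comp φ hs
  have halg := hfs.isAlgebraic_of_card_eq_trdeg (hcard.trans hfaithful)
  refine IsAlgebraic.eq_zero_of_map_eq_zero (φ : MvPolynomial (Fin n) K →+* MvPolynomial (Fin r) K)
    (hs.injective_comp_algebraMap_adjoin φ) (isAlgebraic_aeval halg C) ?_
  rwa [← comp_aeval_apply] at h
end

section
/- Let K be a field and f1,…,fm ∈ K[x1,…,xn]. Then the transcendence degree over K of {f1,…,fm} is at least the rank over the function field L = K(x1,…,xn) of the Jacobian matrix J(f1,…,fm) = (∂fi/∂xj), regardless of the characteristic of K. -/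
open MvPolynomial

/-!
Choose `rank J` rows of the Jacobian `J` that are linearly independent over `K(x)`; it suffices
that the corresponding `fᵢ` are algebraically independent. Linear independence over `K(x)` is the
same as over `K[x]`, and it survives base change to `K̄[x]`. Over the perfect field `K̄`, an
algebraic relation `Q(f) = 0` of minimal total degree has some `(∂ₖQ)(f) ≠ 0`: otherwise each
`∂ₖQ`, being a relation of smaller degree, vanishes identically, so `Q` is constant in
characteristic zero and the `p`-th power of a relation of smaller degree in characteristic `p`. The chain rule
`0 = ∂ⱼ(Q(f)) = ∑ₖ (∂ₖQ)(f) ∂ⱼfₖ` is then a nontrivial linear relation between the rows of `J`.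
-/

namespace MvPolynomial

variable {R σ ι : Type*}

section CommSemiring

variable [CommSemiring R]

theorem coeff_mul_cast_eq_zero_of_pderiv_eq_zero {Q : MvPolynomial σ R} {i : σ}
    (h : pderiv i Q = 0) (α : σ →₀ ℕ) : coeff α Q * (α i : R) = 0 := by
  obtain hα | hα := Nat.eq_zero_or_pos (α i)
  · simp [hα]
  have hsplit : α - Finsupp.single i 1 + Finsupp.single i 1 = α :=
    tsub_add_cancel_of_le (Finsupp.single_le_iff.mpr hα)
  have := coeff_pderiv (i := i) Q (α - Finsupp.single i 1)
  have hcast : (((α - Finsupp.single i 1 : σ →₀ ℕ) i : ℕ) : R) + 1 = α i := by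
    norm_cast
    simp only [Finsupp.coe_tsub, Pi.sub_apply, Finsupp.single_eq_same]
    rw [Nat.sub_add_cancel hα]
  rw [h, coeff_zero, hsplit, hcast] at this
  exact this.symm

theorem totalDegree_pderiv_lt {Q : MvPolynomial σ R} {i : σ} (h : pderiv i Q ≠ 0) :
    (pderiv i Q).totalDegree < Q.totalDegree := by
  have hpos : 0 < Q.totalDegree := by
    rw [pos_iff_ne_zero]
    intro h0
    rw [totalDegree_eq_zero_iff_eq_C.mp h0, pderiv_C] at h
    exact h rfl
  rw [totalDegree, Finset.sup_lt_iff hpos]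
  intro α hα
  have hmem : α + Finsupp.single i 1 ∈ Q.support := by
    rw [mem_support_iff, coeff_pderiv] at hα
    exact mem_support_iff.mpr (left_ne_zero_of_mul hα)
  calc α.sum (fun _ e => e) < (α + Finsupp.single i 1).sum (fun _ e => e) := by
        rw [Finsupp.sum_add_index' (fun _ => rfl) (fun _ _ _ => rfl)]
        simp
    _ ≤ Q.totalDegree := le_totalDegree hmem

theorem pderiv_aeval [Fintype ι] (g : ι → MvPolynomial σ R) (j : σ) (P : MvPolynomial ι R) :
    pderiv j (aeval g P) = ∑ k, aeval g (pderiv k P) * pderiv j (g k) := by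
  classical
  induction P using MvPolynomial.induction_on with
  | C a => simp
  | add p q hp hq => simp only [map_add, hp, hq, add_mul, Finset.sum_add_distrib]
  | mul_X p k hp =>
    simp only [map_mul, aeval_X, pderiv_mul, hp, map_add, add_mul, Finset.sum_add_distrib]
    congr 1
    · rw [Finset.sum_mul]
      exact Finset.sum_congr rfl fun l _ => by ring
    · rw [Finset.sum_eq_single k (fun l _ hl => by simp [Pi.single_eq_of_ne' hl]) (by simp)]
      simp

end CommSemiring

section IsDomain

variable [CommRing R] [IsDomain R]

theorem totalDegree_pow_of_isDomain (P : MvPolynomial σ R) (n : ℕ) :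
    (P ^ n).totalDegree = n * P.totalDegree := by
  rcases eq_or_ne P 0 with rfl | hP
  · cases n <;> simp
  induction n with
  | zero => simp
  | succ n ih => rw [pow_succ, totalDegree_mul_of_isDomain (pow_ne_zero n hP) hP, ih]; ring

theorem natCast_apply_eq_zero_of_forall_pderiv_eq_zero {Q : MvPolynomial σ R}
    (h : ∀ i, pderiv i Q = 0) {α : σ →₀ ℕ} (hα : α ∈ Q.support) (i : σ) : (α i : R) = 0 :=
  (mul_eq_zero.mp (coeff_mul_cast_eq_zero_of_pderiv_eq_zero (h i) α)).resolve_left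
    (mem_support_iff.mp hα)

theorem totalDegree_eq_zero_of_forall_pderiv_eq_zero [CharZero R] {Q : MvPolynomial σ R}
    (h : ∀ i, pderiv i Q = 0) : Q.totalDegree = 0 :=
  (totalDegree_eq_zero_iff _ _).mpr fun _ hα i =>
    Nat.cast_eq_zero.mp (natCast_apply_eq_zero_of_forall_pderiv_eq_zero h hα i)

theorem exists_pow_char_eq_of_forall_pderiv_eq_zero (p : ℕ) [Fact p.Prime] [CharP R p]
    [PerfectRing R p] {Q : MvPolynomial σ R} (h : ∀ i, pderiv i Q = 0) : ∃ P, P ^ p = Q := by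
  have hdvd : ∀ α ∈ Q.support, ∀ i, p ∣ α i := fun α hα i =>
    (CharP.cast_eq_zero_iff R p _).mp (natCast_apply_eq_zero_of_forall_pderiv_eq_zero h hα i)
  refine ⟨∑ α ∈ Q.support, monomial (α.mapRange (· / p) (Nat.zero_div p))
    ((frobeniusEquiv R p).symm (coeff α Q)), ?_⟩
  rw [sum_pow_char]
  conv_rhs => rw [← Q.support_sum_monomial_coeff]
  refine Finset.sum_congr rfl fun α hα => ?_
  have hα_div : p • α.mapRange (· / p) (Nat.zero_div p) = α := by
    ext i
    simp [Nat.mul_div_cancel' (hdvd α hα i)]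
  rw [monomial_pow, frobeniusEquiv_symm_pow_p, hα_div]

end IsDomain

theorem totalDegree_pos_of_aeval_eq_zero {A : Type*} [CommSemiring R] [CommSemiring A]
    [Algebra R A]
    [FaithfulSMul R A] {g : ι → A} {P : MvPolynomial ι R} (hP : P ≠ 0)
    (hPg : aeval g P = 0) : 0 < P.totalDegree := by
  rw [pos_iff_ne_zero]
  intro h0
  rw [totalDegree_eq_zero_iff_eq_C] at h0
  rw [h0, aeval_C, map_eq_zero_iff _ (FaithfulSMul.algebraMap_injective R A)] at hPg
  exact hP (by rw [h0, hPg, C_0])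

theorem exists_aeval_eq_zero_and_aeval_pderiv_ne_zero {K A : Type*} [Field K] [PerfectField K]
    [CommRing A] [IsReduced A] [Nontrivial A] [Algebra K A] {g : ι → A}
    (hg : ¬ AlgebraicIndependent K g) :
    ∃ Q : MvPolynomial ι K, aeval g Q = 0 ∧ ∃ k, aeval g (pderiv k Q) ≠ 0 := by
  obtain ⟨P, hPg, hP⟩ : ∃ P : MvPolynomial ι K, aeval g P = 0 ∧ P ≠ 0 := by
    simpa [algebraicIndependent_iff] using hg
  induction hd : P.totalDegree using Nat.strong_induction_on generalizing P with
  | _ d ih =>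
    by_cases hgood : ∃ k, aeval g (pderiv k P) ≠ 0
    · exact ⟨P, hPg, hgood⟩
    push Not at hgood
    have hpos := totalDegree_pos_of_aeval_eq_zero hP hPg
    by_cases hpd : ∃ k, pderiv k P ≠ 0
    · obtain ⟨k, hk⟩ := hpd
      exact ih _ (hd ▸ totalDegree_pderiv_lt hk) _ (hgood k) hk rfl
    push Not at hpd
    obtain ⟨q, hq⟩ := ExpChar.exists K
    cases hq with
    | zero => exact absurd (totalDegree_eq_zero_of_forall_pderiv_eq_zero hpd) hpos.ne'
    | prime hq =>
      have := Fact.mk hq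
      obtain ⟨P₀, rfl⟩ := exists_pow_char_eq_of_forall_pderiv_eq_zero q hpd
      rw [totalDegree_pow_of_isDomain] at hd hpos
      have hP₀ : P₀ ≠ 0 := by
        rintro rfl
        exact hP (zero_pow hq.ne_zero)
      refine ih P₀.totalDegree (by nlinarith [hq.two_le]) P₀ ?_ hP₀ rfl
      exact IsReduced.eq_zero _ ⟨q, by rwa [map_pow] at hPg⟩

noncomputable def jacobian [CommSemiring R] (g : ι → MvPolynomial σ R) :
    Matrix ι σ (MvPolynomial σ R) :=
  Matrix.of fun i j => pderiv j (g i)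

theorem algebraicIndependent_of_linearIndependent_jacobian_of_perfectField {K : Type*} [Field K]
    [PerfectField K] [Finite ι] {g : ι → MvPolynomial σ K}
    (h : LinearIndependent (MvPolynomial σ K) (jacobian g).row) : AlgebraicIndependent K g := by
  cases nonempty_fintype ι
  by_contra hg
  obtain ⟨Q, hQ, k, hk⟩ := exists_aeval_eq_zero_and_aeval_pderiv_ne_zero hg
  have hrel : ∑ i, aeval g (pderiv i Q) • (jacobian g).row i = 0 := by
    funext j
    simp only [Finset.sum_apply, Pi.smul_apply, smul_eq_mul, jacobian, Matrix.row, Matrix.of_apply,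
      Pi.zero_apply, ← pderiv_aeval, hQ, map_zero]
  exact hk (Fintype.linearIndependent_iff.mp h _ hrel k)

theorem algebraicIndependent_of_linearIndependent_jacobian {K : Type*} [Field K] [Finite σ]
    [Finite ι] {g : ι → MvPolynomial σ K}
    (h : LinearIndependent (MvPolynomial σ K) (jacobian g).row) : AlgebraicIndependent K g := by
  let K' := AlgebraicClosure K
  let _ := algebraMvPolynomial (σ := σ) (R := K) (S := K')
  have h' : LinearIndependent (MvPolynomial σ K') (jacobian (map (algebraMap K K') ∘ g)).row := by
    have hrow : (jacobian (map (algebraMap K K') ∘ g)).row =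
        fun i => algebraMap _ _ ∘ (jacobian g).row i := by
      ext i j
      simp [jacobian, Matrix.row, pderiv_map]
    rw [hrow, linearIndependent_algebraMap_comp_iff]
    exact h
  have hK' := algebraicIndependent_of_linearIndependent_jacobian_of_perfectField h'
  exact hK'.of_ringHom_of_comp_eq (algebraMap K K') (map (algebraMap K K'))
    (algebraMap K K').injective (map_comp_C _).symm

end MvPolynomial

theorem Matrix.exists_linearIndepOn_row_card_eq_rank {R m n : Type*} [Field R] [Fintype m]
    [Fintype n] (A : Matrix m n R) : ∃ s : Finset m, LinearIndepOn R A.row s ∧ s.card = A.rank := by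
  classical
  obtain ⟨b, -, -, hspan, hb⟩ :=
    exists_linearIndepOn_extension (linearIndepOn_empty R A.row) (Set.empty_subset Set.univ)
  refine ⟨b.toFinset, by simpa using hb, ?_⟩
  have hspan_eq : Submodule.span R (Set.range A.row) =
      Submodule.span R (Set.range fun i : b => A.row i) := by
    rw [← Set.image_eq_range, ← Set.image_univ]
    exact le_antisymm (Submodule.span_le.mpr hspan)
      (Submodule.span_mono (Set.image_mono (Set.subset_univ b)))
  rw [A.rank_eq_finrank_span_row, hspan_eq, finrank_span_eq_card hb, Set.toFinset_card]

theorem card_le_trdeg (K : Type*) {A : Type*} [CommRing K] [CommRing A] [Algebra K A] {m : ℕ}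
    {f : Fin m → A} {s : Finset (Fin m)} (hs : AlgebraicIndependent K fun i : s => f i) :
    s.card ≤ trdeg K f :=
  le_csSup ⟨m, fun _ ⟨t, ht, _⟩ => ht ▸ t.card_le_univ.trans_eq (Fintype.card_fin m)⟩ ⟨s, rfl, hs⟩

theorem jacobian_rank_le_trdeg (K : Type*) [Field K] (n m : ℕ)
    (f : Fin m → MvPolynomial (Fin n) K) :
    (Matrix.of fun (i : Fin m) (j : Fin n) =>
        algebraMap (MvPolynomial (Fin n) K) (FractionRing (MvPolynomial (Fin n) K))
          (MvPolynomial.pderiv j (f i))).rank ≤ trdeg K f := by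
  obtain ⟨s, hs, hcard⟩ := Matrix.exists_linearIndepOn_row_card_eq_rank (Matrix.of fun i j =>
    algebraMap (MvPolynomial (Fin n) K) (FractionRing (MvPolynomial (Fin n) K)) (pderiv j (f i)))
  rw [← hcard]
  refine card_le_trdeg K (algebraicIndependent_of_linearIndependent_jacobian ?_)
  rw [← linearIndependent_algebraMap_comp_iff (S := FractionRing (MvPolynomial (Fin n) K))]
  exact hs
end

section
/- Let R be a commutative ring, ℓ ≥ 1, d ≥ 2, and let f ∈ R[t] be a nonzero polynomial with at most ℓ nonzero terms and degree at most d. Then the number of prime numbers p such that f ≡ 0 modulo the ideal ⟨t^p − 1⟩ of R[t] is at most ℓ·log₂(d) − 1. -/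
/-!
Evaluating at `X ↦ single 1 1` in the group ring `R[ℤ/p]` kills `X ^ p - 1` and sends `t ^ j` to
`single (j mod p) 1`. If `f` vanishes there, its leading term `t ^ e` must cancel against another
term `t ^ j` with `p ∣ e - j`. So every such prime divides `N = ∏_{j ∈ supp f, j ≠ e} (e - j)`,
a nonzero number at most `d ^ (ℓ - 1)`, which has at most `log₂ N ≤ (ℓ - 1) log₂ d` prime factors.
-/

open Polynomial

namespace Polynomial

variable {R : Type*} [CommRing R]

lemma aeval_single_one_eq_sum (n : ℕ) (f : R[X]) :
    aeval (AddMonoidAlgebra.single (1 : ZMod n) (1 : R)) f =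
      ∑ j ∈ f.support, AddMonoidAlgebra.single (j : ZMod n) (f.coeff j) := by
  rw [aeval_def, eval₂_eq_sum, sum_def]
  refine Finset.sum_congr rfl fun j _ => ?_
  rw [AddMonoidAlgebra.single_pow, one_pow, nsmul_one, AddMonoidAlgebra.coe_algebraMap,
    Function.comp_apply, Algebra.algebraMap_self, RingHom.id_apply,
    AddMonoidAlgebra.single_mul_single, zero_add, mul_one]

lemma aeval_single_one_eq_zero_of_mem_span_X_pow_sub_one {n : ℕ} {f : R[X]}
    (hmem : f ∈ Ideal.span {X ^ n - 1}) :
    aeval (AddMonoidAlgebra.single (1 : ZMod n) (1 : R)) f = 0 := by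
  obtain ⟨g, rfl⟩ := Ideal.mem_span_singleton.mp hmem
  rw [map_mul, map_sub, map_pow, map_one, aeval_X, AddMonoidAlgebra.single_pow, one_pow,
    nsmul_one, ZMod.natCast_self, AddMonoidAlgebra.one_def, sub_self, zero_mul]

lemma exists_dvd_natDegree_sub_of_mem_span_X_pow_sub_one {f : R[X]} (hf : f ≠ 0) {n : ℕ}
    (hmem : f ∈ Ideal.span {X ^ n - 1}) :
    ∃ j ∈ f.support.erase f.natDegree, n ∣ f.natDegree - j := by
  classical
  by_contra! hne
  have hcoeff := congr_arg (fun a => a.coeff (f.natDegree : ZMod n))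
    (aeval_single_one_eq_zero_of_mem_span_X_pow_sub_one hmem)
  simp only [aeval_single_one_eq_sum, AddMonoidAlgebra.coeff_sum, Finset.sum_apply',
    AddMonoidAlgebra.coeff_single, Finsupp.single_apply] at hcoeff
  rw [Finset.sum_eq_single_of_mem _ (natDegree_mem_support_of_nonzero hf), if_pos rfl] at hcoeff
  · exact leadingCoeff_ne_zero.mpr hf hcoeff
  intro j hj hjne
  refine if_neg fun hmod => hne j (Finset.mem_erase.mpr ⟨hjne, hj⟩) ?_
  rwa [ZMod.natCast_eq_natCast_iff, Nat.modEq_iff_dvd' (le_natDegree_of_mem_supp j hj)] at hmod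

lemma prod_natDegree_sub_ne_zero (f : R[X]) :
    ∏ j ∈ f.support.erase f.natDegree, (f.natDegree - j) ≠ 0 :=
  Finset.prod_ne_zero_iff.mpr fun j hj => Nat.sub_ne_zero_of_lt <|
    (le_natDegree_of_mem_supp j (Finset.mem_of_mem_erase hj)).lt_of_ne (Finset.ne_of_mem_erase hj)

lemma prod_natDegree_sub_le_pow (f : R[X]) :
    ∏ j ∈ f.support.erase f.natDegree, (f.natDegree - j) ≤ f.natDegree ^ (f.support.card - 1) :=
  calc ∏ j ∈ f.support.erase f.natDegree, (f.natDegree - j)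
      ≤ ∏ _j ∈ f.support.erase f.natDegree, f.natDegree :=
        Finset.prod_le_prod' fun j _ => Nat.sub_le _ _
    _ = f.natDegree ^ (f.support.erase f.natDegree).card := Finset.prod_const _
    _ = f.natDegree ^ (f.support.card - 1) := by
        rcases eq_or_ne f 0 with rfl | hf
        · simp
        · rw [Finset.card_erase_of_mem (natDegree_mem_support_of_nonzero hf)]

end Polynomial

lemma Nat.two_pow_card_primeFactors_le {n : ℕ} (hn : n ≠ 0) : 2 ^ n.primeFactors.card ≤ n :=
  calc 2 ^ n.primeFactors.card ≤ ∏ p ∈ n.primeFactors, p :=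
        Finset.pow_card_le_prod _ _ _ fun _ hp => (Nat.prime_of_mem_primeFactors hp).two_le
    _ ≤ n := Nat.le_of_dvd (Nat.pos_of_ne_zero hn) n.prod_primeFactors_dvd

lemma natCast_le_mul_logb_sub_one {k ℓ d : ℕ} (hℓ : 1 ≤ ℓ) (hd : 2 ≤ d)
    (h : 2 ^ k ≤ d ^ (ℓ - 1)) : (k : ℝ) ≤ ℓ * Real.logb 2 d - 1 := by
  have hlog : (k : ℝ) ≤ (ℓ - 1 : ℕ) * Real.logb 2 d := by
    rw [← Real.logb_pow, Real.le_logb_iff_rpow_le one_lt_two (by positivity), Real.rpow_natCast]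
    exact_mod_cast h
  have hd' : 1 ≤ Real.logb 2 d := by
    rw [Real.le_logb_iff_rpow_le one_lt_two (by positivity), Real.rpow_one]
    exact_mod_cast hd
  push_cast [hℓ] at hlog
  linarith

theorem sparse_pit_primes (R : Type*) [CommRing R] (ℓ d : ℕ) (hℓ : 1 ≤ ℓ) (hd : 2 ≤ d)
    (f : Polynomial R) (hf : f ≠ 0) (hsparse : f.support.card ≤ ℓ)
    (hdeg : f.natDegree ≤ d) :
    {p : ℕ | p.Prime ∧ f ∈ Ideal.span {(Polynomial.X : Polynomial R) ^ p - 1}}.Finite ∧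
    (({p : ℕ | p.Prime ∧ f ∈ Ideal.span {(Polynomial.X : Polynomial R) ^ p - 1}}.ncard : ℝ)
      ≤ ℓ * Real.logb 2 d - 1) := by
  set S := {p : ℕ | p.Prime ∧ f ∈ Ideal.span {(X : R[X]) ^ p - 1}}
  set N := ∏ j ∈ f.support.erase f.natDegree, (f.natDegree - j)
  have hN : N ≠ 0 := f.prod_natDegree_sub_ne_zero
  have hS : S ⊆ N.primeFactors := fun p ⟨hp, hmem⟩ => by
    obtain ⟨j, hj, hdvd⟩ := exists_dvd_natDegree_sub_of_mem_span_X_pow_sub_one hf hmem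
    exact Nat.mem_primeFactors.mpr ⟨hp, hdvd.trans (Finset.dvd_prod_of_mem _ hj), hN⟩
  refine ⟨N.primeFactors.finite_toSet.subset hS, natCast_le_mul_logb_sub_one hℓ hd ?_⟩
  calc 2 ^ S.ncard ≤ 2 ^ N.primeFactors.card :=
        Nat.pow_le_pow_right two_pos ((Set.ncard_le_ncard hS).trans_eq (Set.ncard_coe_finset _))
    _ ≤ N := Nat.two_pow_card_primeFactors_le hN
    _ ≤ f.natDegree ^ (f.support.card - 1) := f.prod_natDegree_sub_le_pow
    _ ≤ d ^ (ℓ - 1) :=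
        (Nat.pow_le_pow_left hdeg _).trans (Nat.pow_le_pow_right (by omega) (by omega))
end

section
/- For every real number r ≥ 2, the interval [1, r² + 1] contains at least ⌈r⌉ prime numbers. -/
/-!
Every binomial coefficient `C(n, k)` divides `lcm(1, …, n) = ∏_{p ≤ n} p ^ ⌊log_p n⌋ ≤ n ^ π(n)`,
so summing over `k` gives the Chebyshev-type bound `2 ^ n ≤ (n + 1) n ^ π(n)`. For `n = m²` with
`m ≥ 7`, the assumption `π(m²) ≤ m` would give `2 ^ m² ≤ (m² + 1) m ^ 2m < (2m²) ^ m ≤ 2 ^ m²`;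
the cases `2 ≤ m < 7` are checked by computation. With `m = ⌊r⌋` this gives
`⌈r⌉ ≤ m + 1 ≤ π(m² + 1) ≤ π(r² + 1)`.
-/

open Finset
open scoped Nat.Prime

namespace Nat

theorem lcmUpto_le_pow_primeCounting (n : ℕ) : lcmUpto n ≤ n ^ π n := by
  rw [lcmUpto_eq_prod_pow_log, ← primesLE_card_eq_primeCounting]
  refine prod_le_pow_card _ _ _ fun p hp ↦ pow_log_le_self p ?_
  rintro rfl
  simp at hp

theorem two_pow_le_succ_mul_pow_primeCounting (n : ℕ) : 2 ^ n ≤ (n + 1) * n ^ π n :=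
  (Chebyshev.two_pow_le_mul_lcmUpto n).trans <|
    Nat.mul_le_mul_left _ (lcmUpto_le_pow_primeCounting n)

theorem two_mul_sq_le_two_pow {n : ℕ} (hn : 7 ≤ n) : 2 * n ^ 2 ≤ 2 ^ n := by
  induction n, hn using Nat.le_induction with
  | base => norm_num
  | succ k hk ih =>
    rw [pow_succ 2 k]
    nlinarith

theorem succ_le_primeCounting_sq {m : ℕ} (hm : 7 ≤ m) : m + 1 ≤ π (m ^ 2) := by
  by_contra! h
  have h2m : 2 * m ^ 2 ≤ 2 ^ m := two_mul_sq_le_two_pow hm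
  refine lt_irrefl (2 ^ m ^ 2) ?_
  calc
    2 ^ m ^ 2 ≤ (m ^ 2 + 1) * (m ^ 2) ^ π (m ^ 2) := two_pow_le_succ_mul_pow_primeCounting _
    _ ≤ (m ^ 2 + 1) * (m ^ 2) ^ m := by gcongr <;> [exact one_le_pow₀ (by omega); omega]
    _ < 2 ^ m * (m ^ 2) ^ m := by gcongr; nlinarith
    _ = (2 * m ^ 2) ^ m := (mul_pow ..).symm
    _ ≤ (2 ^ m) ^ m := by gcongr
    _ = 2 ^ m ^ 2 := by rw [← pow_mul, sq]

theorem succ_le_primeCounting_sq_add_one {m : ℕ} (hm : 2 ≤ m) : m + 1 ≤ π (m ^ 2 + 1) := by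
  rcases lt_or_ge m 7 with hm7 | hm7
  · interval_cases m <;> decide
  · exact (succ_le_primeCounting_sq hm7).trans (monotone_primeCounting (le_succ _))

theorem ncard_setOf_prime_le (x : ℝ) :
    {p : ℕ | p.Prime ∧ 1 ≤ (p : ℝ) ∧ (p : ℝ) ≤ x}.ncard = π ⌊x⌋₊ := by
  rw [← primesLE_card_eq_primeCounting, ← Set.ncard_coe_finset]
  congr 1
  ext p
  simp only [Set.mem_ofPred_eq, mem_coe, mem_primesLE]
  constructor
  · rintro ⟨hp, -, hpx⟩
    exact ⟨le_floor hpx, hp⟩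
  · rintro ⟨hpx, hp⟩
    exact ⟨hp, one_le_cast.2 hp.one_le, (le_floor_iff' hp.ne_zero).1 hpx⟩

end Nat

theorem primes_in_interval (r : ℝ) (hr : 2 ≤ r) :
    ⌈r⌉₊ ≤ {p : ℕ | p.Prime ∧ 1 ≤ (p : ℝ) ∧ (p : ℝ) ≤ r ^ 2 + 1}.ncard := by
  have h2 : 2 ≤ ⌊r⌋₊ := Nat.le_floor (mod_cast hr)
  have hfloor : (⌊r⌋₊ : ℝ) ≤ r := Nat.floor_le (by linarith)
  rw [Nat.ncard_setOf_prime_le]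
  calc ⌈r⌉₊ ≤ ⌊r⌋₊ + 1 := Nat.ceil_le_floor_add_one r
    _ ≤ π (⌊r⌋₊ ^ 2 + 1) := Nat.succ_le_primeCounting_sq_add_one h2
    _ ≤ π ⌊r ^ 2 + 1⌋₊ := Nat.monotone_primeCounting <| Nat.le_floor <| by
      push_cast
      gcongr
end

section
/- Let n ≥ 2, δ ≥ 1, and over a field K define f1 := x1, fi := xi − x_{i−1}^δ for i = 2,…,n, and f_{n+1} := x_n^δ in K[x1,…,xn]. Then trdeg{f1,…,f_{n+1}} = n and every nonzero polynomial F ∈ K[y1,…,y_{n+1}] with F(f1,…,f_{n+1}) = 0 has total degree at least δ^n. -/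
/-!
The first `n` polynomials `g = (f₁, …, fₙ)` form a triangular family: `xᵢ = fᵢ + x_{i-1}^δ`, so
they generate `K[x]`, hence (being `n = trdeg K[x]` of them) are algebraically independent, and
`f_{n+1} = P(g)` for some `P`. Splitting off the last variable, `F(g, P(g)) = 0` makes `P` a root
of `F` viewed as a polynomial in `y_{n+1}` over `K[y₁, …, yₙ]`, so every annihilator is a multiple
of `y_{n+1} - P(y₁, …, yₙ)`. Its degree is at least `δⁿ`: along the curve `xᵢ = t^{δ^(i-1)}` all
of `f₂, …, fₙ` vanish, so substituting `y₁ = t` and `yᵢ = 0` otherwise turns it into `-t^{δⁿ}`.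
-/

open MvPolynomial

theorem trdeg_eq_of_castSucc {K A : Type*} [CommRing K] [CommRing A] [Algebra K A] {m : ℕ}
    {f : Fin (m + 1) → A} (hind : AlgebraicIndependent K (f ∘ Fin.castSucc))
    (hdep : ¬ AlgebraicIndependent K f) : trdeg K f = m := by
  set S := {r | ∃ s : Finset (Fin (m + 1)), s.card = r ∧
    AlgebraicIndependent K (fun i : ↥s => f i.1)}
  have hmem : m ∈ S := by
    let pred (i : ↥({Fin.last m}ᶜ : Finset (Fin (m + 1)))) : Fin m :=
      i.1.castPred fun h => Finset.mem_compl.mp i.2 (by simp [h])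
    have hf : (fun i => f i.1) = (f ∘ Fin.castSucc) ∘ pred := by
      funext i; simp [pred]
    refine ⟨{Fin.last m}ᶜ, by simp [Finset.card_compl], hf ▸ hind.comp pred ?_⟩
    exact fun i j hij => Subtype.ext (by simpa [pred] using hij)
  have hbound : ∀ r ∈ S, r ≤ m := by
    rintro r ⟨s, rfl, hs⟩
    by_contra! hlt
    have hcard := Finset.card_le_univ s
    rw [Fintype.card_fin] at hcard
    obtain rfl : s = Finset.univ := Finset.eq_univ_of_card s (by rw [Fintype.card_fin]; omega)
    exact hdep <| hs.comp (fun i => ⟨i, Finset.mem_univ i⟩) fun i j hij => congrArg Subtype.val hij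
  exact le_antisymm (csSup_le ⟨m, hmem⟩ hbound) (le_csSup ⟨m, hbound⟩ hmem)

namespace MvPolynomial

theorem algebraicIndependent_of_adjoin_range_eq_top {R ι : Type*} [CommRing R]
    [IsDomain R] [Finite ι] {g : ι → MvPolynomial ι R}
    (hg : Algebra.adjoin R (Set.range g) = ⊤) : AlgebraicIndependent R g := by
  have : Algebra.IsIntegral (Algebra.adjoin R (Set.range g)) (MvPolynomial ι R) :=
    Algebra.isIntegral_of_surjective fun p => ⟨⟨p, hg ▸ Algebra.mem_top⟩, rfl⟩
  exact (Algebra.IsAlgebraic.isTranscendenceBasis_of_lift_le_trdeg_of_finite R g (by simp)).1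

theorem natDegree_aeval_le_totalDegree {R σ : Type*} [CommSemiring R]
    {g : σ → Polynomial R} (hg : ∀ i, (g i).natDegree ≤ 1) (F : MvPolynomial σ R) :
    (aeval g F).natDegree ≤ F.totalDegree := by
  conv_lhs => rw [F.as_sum]
  rw [map_sum]
  refine Polynomial.natDegree_sum_le_of_forall_le _ _ fun d hd => ?_
  rw [aeval_monomial, Polynomial.algebraMap_apply, Algebra.algebraMap_self, RingHom.id_apply]
  refine Polynomial.natDegree_C_mul_le _ _ |>.trans <| Polynomial.natDegree_prod_le _ _ |>.trans ?_
  refine le_trans (Finset.sum_le_sum fun i _ => ?_) (le_totalDegree hd)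
  exact Polynomial.natDegree_pow_le.trans (by simpa using Nat.mul_le_mul_left (d i) (hg i))

variable (R : Type*) [CommRing R] (n : ℕ)

noncomputable def lastEquiv :
    MvPolynomial (Fin (n + 1)) R ≃ₐ[R] Polynomial (MvPolynomial (Fin n) R) :=
  (renameEquiv R finSuccEquivLast).trans (optionEquivLeft R (Fin n))

variable {R n}

@[simp]
theorem lastEquiv_X_last : lastEquiv R n (X (Fin.last n)) = Polynomial.X := by
  simp [lastEquiv, finSuccEquivLast_last, optionEquivLeft_X_none]

@[simp]
theorem lastEquiv_X_castSucc (i : Fin n) :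
    lastEquiv R n (X i.castSucc) = Polynomial.C (X i) := by
  simp [lastEquiv, finSuccEquivLast_castSucc, optionEquivLeft_X_some]

@[simp]
theorem lastEquiv_rename_castSucc (p : MvPolynomial (Fin n) R) :
    lastEquiv R n (rename Fin.castSucc p) = Polynomial.C p := by
  have : ((lastEquiv R n).toAlgHom.comp (rename Fin.castSucc)) =
      (Polynomial.CAlgHom : MvPolynomial (Fin n) R →ₐ[R] _) := by
    ext i; simp
  exact congrArg (· p) this

theorem X_last_sub_rename_ne_zero [Nontrivial R] (P : MvPolynomial (Fin n) R) :
    X (Fin.last n) - rename Fin.castSucc P ≠ 0 := by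
  rw [← EmbeddingLike.map_ne_zero_iff (f := lastEquiv R n)]
  simpa using Polynomial.X_sub_C_ne_zero P

theorem aeval_eq_aeval_comp_lastEquiv {A : Type*} [CommRing A] [Algebra R A]
    {f : Fin (n + 1) → A} {P : MvPolynomial (Fin n) R}
    (hP : aeval (f ∘ Fin.castSucc) P = f (Fin.last n)) :
    aeval f = ((aeval (f ∘ Fin.castSucc)).comp
      ((Polynomial.aeval P).restrictScalars R)).comp (lastEquiv R n).toAlgHom := by
  ext j
  induction j using Fin.lastCases with
  | last => simp [hP]
  | cast i => simp

theorem X_last_sub_rename_dvd {A : Type*} [CommRing A] [Algebra R A]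
    {f : Fin (n + 1) → A} (hf : AlgebraicIndependent R (f ∘ Fin.castSucc))
    {P : MvPolynomial (Fin n) R} (hP : aeval (f ∘ Fin.castSucc) P = f (Fin.last n))
    {F : MvPolynomial (Fin (n + 1)) R} (hF : aeval f F = 0) :
    X (Fin.last n) - rename Fin.castSucc P ∣ F := by
  have hroot : (lastEquiv R n F).IsRoot P := by
    rw [aeval_eq_aeval_comp_lastEquiv hP] at hF
    exact hf.eq_zero_of_aeval_eq_zero _ hF
  rw [← map_dvd_iff (lastEquiv R n), map_sub, lastEquiv_X_last, lastEquiv_rename_castSucc]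
  exact Polynomial.dvd_iff_isRoot.mpr hroot

end MvPolynomial

def IsTriangularFamily {R : Type*} [CommRing R] {n : ℕ} (δ : ℕ)
    (g : Fin n → MvPolynomial (Fin n) R) : Prop :=
  ∀ i (hi : i < n), g ⟨i, hi⟩ = X ⟨i, hi⟩ - if i = 0 then 0 else X ⟨i - 1, by omega⟩ ^ δ

namespace IsTriangularFamily

variable {R : Type*} [CommRing R] {n δ : ℕ} {g : Fin n → MvPolynomial (Fin n) R}

theorem adjoin_range_eq_top (hg : IsTriangularFamily δ g) :
    Algebra.adjoin R (Set.range g) = ⊤ := by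
  rw [eq_top_iff, ← adjoin_range_X, Algebra.adjoin_le_iff]
  rintro _ ⟨⟨i, hi⟩, rfl⟩
  induction i with
  | zero => simpa [hg 0 hi] using Algebra.subset_adjoin (Set.mem_range_self (f := g) ⟨0, hi⟩)
  | succ i ih =>
    have hX : X ⟨i + 1, hi⟩ = g ⟨i + 1, hi⟩ + X ⟨i, by omega⟩ ^ δ := by simp [hg (i + 1) hi]
    rw [hX]
    exact add_mem (Algebra.subset_adjoin ⟨_, rfl⟩) (pow_mem (ih _) _)

theorem aeval_curve_comp_aeval (hg : IsTriangularFamily δ g) :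
    (aeval fun i : Fin n => (Polynomial.X : Polynomial R) ^ δ ^ (i : ℕ)).comp (aeval g) =
      aeval fun i : Fin n => if (i : ℕ) = 0 then Polynomial.X else 0 := by
  ext ⟨i, hi⟩ : 1
  rcases i with _ | i <;> simp [hg _ hi, pow_succ, pow_mul]

theorem pow_le_totalDegree_X_last_sub_rename [Nontrivial R] (hg : IsTriangularFamily δ g)
    (hn : 0 < n) {P : MvPolynomial (Fin n) R} (hP : aeval g P = X ⟨n - 1, by omega⟩ ^ δ) :
    δ ^ n ≤ (X (Fin.last n) - rename Fin.castSucc P).totalDegree := by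
  set φ : Fin (n + 1) → Polynomial R := fun j => if (j : ℕ) = 0 then Polynomial.X else 0
  have hφ : aeval φ (X (Fin.last n) - rename Fin.castSucc P) = -Polynomial.X ^ δ ^ n := by
    have hcurve := congrArg (· P) hg.aeval_curve_comp_aeval
    simp only [AlgHom.comp_apply, hP, map_pow, aeval_X] at hcurve
    have hinit : φ ∘ Fin.castSucc = fun i : Fin n => if (i : ℕ) = 0 then Polynomial.X else 0 := by
      funext i; simp only [φ, Function.comp_apply, Fin.val_castSucc]
    rw [map_sub, aeval_X, aeval_rename, hinit, ← hcurve, ← pow_mul, ← pow_succ,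
      Nat.sub_add_cancel hn]
    simp [φ, hn.ne']
  calc δ ^ n = (aeval φ (X (Fin.last n) - rename Fin.castSucc P)).natDegree := by simp [hφ]
    _ ≤ _ := natDegree_aeval_le_totalDegree (fun j => by unfold φ; split <;> simp) _

end IsTriangularFamily

theorem annihilating_degree_bound_tight (K : Type*) [Field K] (n δ : ℕ)
    (hn : 2 ≤ n) (f : Fin (n + 1) → MvPolynomial (Fin n) K)
    (h1 : f ⟨0, by omega⟩ = MvPolynomial.X ⟨0, by omega⟩)
    (h2 : ∀ i : ℕ, ∀ _ : 1 ≤ i, ∀ hi2 : i < n,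
      f ⟨i, by omega⟩ =
        MvPolynomial.X ⟨i, by omega⟩ - (MvPolynomial.X ⟨i - 1, by omega⟩) ^ δ)
    (h3 : f ⟨n, by omega⟩ = (MvPolynomial.X ⟨n - 1, by omega⟩) ^ δ) :
    trdeg K f = n ∧
    ∀ F : MvPolynomial (Fin (n + 1)) K, F ≠ 0 → MvPolynomial.aeval f F = 0 →
      δ ^ n ≤ F.totalDegree := by
  have hg : IsTriangularFamily δ (f ∘ Fin.castSucc) := by
    rintro (_ | i) hi
    · simpa using h1
    · simpa using h2 (i + 1) (by omega) hi
  have hind : AlgebraicIndependent K (f ∘ Fin.castSucc) :=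
    algebraicIndependent_of_adjoin_range_eq_top hg.adjoin_range_eq_top
  obtain ⟨P, hP⟩ : ∃ P : MvPolynomial (Fin n) K, aeval (f ∘ Fin.castSucc) P = f (Fin.last n) := by
    rw [← AlgHom.mem_range, aeval_range, hg.adjoin_range_eq_top]
    trivial
  have hA0 : X (Fin.last n) - rename Fin.castSucc P ≠ 0 := X_last_sub_rename_ne_zero P
  refine ⟨trdeg_eq_of_castSucc hind fun h => hA0 (h.eq_zero_of_aeval_eq_zero _ ?_),
    fun F hF hFf => ?_⟩
  · rw [map_sub, aeval_X, aeval_rename, hP, sub_self]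
  · calc δ ^ n ≤ (X (Fin.last n) - rename Fin.castSucc P).totalDegree :=
          hg.pow_le_totalDegree_X_last_sub_rename (by omega) (hP.trans h3)
      _ ≤ F.totalDegree := totalDegree_le_of_dvd_of_isDomain (X_last_sub_rename_dvd hind hP hFf) hF
end

section
/- Let s ≤ n be positive integers. For an index set I = {j1 < … < js} ⊆ {1,…,n}, let h_I := det of the s×s matrix whose (a,b) entry is t^{j_a·(n+1)^b} ∈ K[t]. Then h_I is nonzero, deg(h_I) = j1·(n+1) + j2·(n+1)² + … + js·(n+1)^s < (n+1)^{s+1}, and for distinct index sets I ≠ I' of size s we have deg(h_I) ≠ deg(h_{I'}). -/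
/-!
Expanding the determinant over permutations writes it as
`∑ σ, sign σ • X ^ (∑ i, j (σ i) * w i)` with weights `w i = (n + 1) ^ (i + 1)`. Since `j` and
`w` are both strictly increasing, the strict rearrangement inequality makes the identity's exponent
strictly larger than all others, so the determinant is monic of that degree. The degree is `n + 1`
times the number with base-`(n + 1)` digits `j 0, …, j (s - 1)`, which gives both the bound and
the injectivity in `j`.
-/

/-- The determinant of the Vandermonde-like matrix of monomials
`t ^ (j a * (n+1) ^ (b+1))`. -/
noncomputable def vdmDet (K : Type*) [Field K] (n s : ℕ) (j : Fin s → ℕ) : Polynomial K :=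
  (Matrix.of fun a b : Fin s =>
    (Polynomial.X : Polynomial K) ^ (j a * (n + 1) ^ ((b : ℕ) + 1))).det

open Polynomial Finset Equiv

namespace Matrix

variable {R ι : Type*} [CommRing R] [Fintype ι] [DecidableEq ι] (e : ι → ι → ℕ)

theorem det_of_X_pow :
    (of fun a b => (X : R[X]) ^ e a b).det =
      ∑ σ : Perm ι, monomial (∑ i, e (σ i) i) (Perm.sign σ : R) := by
  simp only [det_apply', of_apply, prod_pow_eq_pow_sum, ← C_mul_X_pow_eq_monomial,
    map_intCast]

variable {e}

theorem coeff_det_of_X_pow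
    (he : ∀ σ : Perm ι, σ ≠ 1 → ∑ i, e (σ i) i < ∑ i, e i i) :
    (of fun a b => (X : R[X]) ^ e a b).det.coeff (∑ i, e i i) = 1 := by
  rw [det_of_X_pow, finsetSum_coeff, sum_eq_single_of_mem 1 (mem_univ _)]
  · simp
  · intro σ _ hσ
    rw [coeff_monomial, if_neg (he σ hσ).ne]

theorem natDegree_det_of_X_pow_le
    (he : ∀ σ : Perm ι, σ ≠ 1 → ∑ i, e (σ i) i < ∑ i, e i i) :
    (of fun a b => (X : R[X]) ^ e a b).det.natDegree ≤ ∑ i, e i i := by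
  rw [det_of_X_pow]
  refine natDegree_sum_le_of_forall_le _ _ fun σ _ => (natDegree_monomial_le _).trans ?_
  rcases eq_or_ne σ 1 with rfl | hσ
  · rfl
  · exact (he σ hσ).le

theorem monic_det_of_X_pow (he : ∀ σ : Perm ι, σ ≠ 1 → ∑ i, e (σ i) i < ∑ i, e i i) :
    (of fun a b => (X : R[X]) ^ e a b).det.Monic :=
  monic_of_natDegree_le_of_coeff_eq_one _ (natDegree_det_of_X_pow_le he)
    (coeff_det_of_X_pow he)

theorem natDegree_det_of_X_pow [Nontrivial R]
    (he : ∀ σ : Perm ι, σ ≠ 1 → ∑ i, e (σ i) i < ∑ i, e i i) :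
    (of fun a b => (X : R[X]) ^ e a b).det.natDegree = ∑ i, e i i :=
  natDegree_eq_of_le_of_coeff_ne_zero (natDegree_det_of_X_pow_le he)
    (by rw [coeff_det_of_X_pow he]; exact one_ne_zero)

end Matrix

theorem Equiv.Perm.eq_one_of_monotone {ι : Type*} [LinearOrder ι] [Finite ι] {σ : Perm ι}
    (hσ : Monotone σ) : σ = 1 := by
  ext i
  exact DFunLike.congr_fun
    (Subsingleton.elim ((hσ.strictMono_of_injective σ.injective).orderIsoOfSurjective σ
      σ.surjective) (OrderIso.refl ι)) i

theorem StrictMono.sum_comp_perm_mul_lt_sum_mul {ι α : Type*} [LinearOrder ι] [Fintype ι]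
    [Semiring α] [LinearOrder α] [IsStrictOrderedRing α] [ExistsAddOfLE α] {f g : ι → α}
    (hf : StrictMono f) (hg : StrictMono g) {σ : Perm ι} (hσ : σ ≠ 1) :
    ∑ i, f (σ i) * g i < ∑ i, f i * g i := by
  refine ((hf.monotone.monovary hg.monotone).sum_comp_perm_mul_lt_sum_mul_iff).2 fun h => hσ ?_
  exact Perm.eq_one_of_monotone fun a b hab =>
    hf.le_iff_le.1 (hg.trans_monovary h hab)

namespace Nat

theorem sum_mul_pow_lt_pow {b s : ℕ} {f : Fin s → ℕ} (hf : ∀ a, f a < b) :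
    ∑ a, f a * b ^ (a : ℕ) < b ^ s :=
  (finFunctionFinEquiv fun a => (⟨f a, hf a⟩ : Fin b)).isLt

theorem eq_of_sum_mul_pow_eq {b s : ℕ} {f g : Fin s → ℕ} (hf : ∀ a, f a < b)
    (hg : ∀ a, g a < b)
    (h : ∑ a, f a * b ^ (a : ℕ) = ∑ a, g a * b ^ (a : ℕ)) : f = g := by
  have := finFunctionFinEquiv.injective (Fin.ext h :
    finFunctionFinEquiv (fun a => (⟨f a, hf a⟩ : Fin b)) =
      finFunctionFinEquiv fun a => (⟨g a, hg a⟩ : Fin b))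
  funext a
  exact congrArg Fin.val (congrFun this a)

theorem sum_mul_pow_succ {b s : ℕ} (f : Fin s → ℕ) :
    ∑ a, f a * b ^ ((a : ℕ) + 1) = b * ∑ a, f a * b ^ (a : ℕ) := by
  rw [mul_sum]
  exact sum_congr rfl fun a _ => by ring

end Nat

theorem vdmDet_exponent_lt {n s : ℕ} (hn : 0 < n) {j : Fin s → ℕ} (hj : StrictMono j)
    {σ : Perm (Fin s)} (hσ : σ ≠ 1) :
    ∑ i, j (σ i) * (n + 1) ^ ((i : ℕ) + 1) < ∑ i, j i * (n + 1) ^ ((i : ℕ) + 1) :=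
  hj.sum_comp_perm_mul_lt_sum_mul
    (fun _ _ hab => Nat.pow_lt_pow_right (by omega) (by simpa using hab)) hσ

theorem monic_vdmDet (K : Type*) [Field K] {n s : ℕ} (hn : 0 < n) {j : Fin s → ℕ}
    (hj : StrictMono j) : (vdmDet K n s j).Monic :=
  Matrix.monic_det_of_X_pow fun _ => vdmDet_exponent_lt hn hj

theorem natDegree_vdmDet (K : Type*) [Field K] {n s : ℕ} (hn : 0 < n) {j : Fin s → ℕ}
    (hj : StrictMono j) :
    (vdmDet K n s j).natDegree = ∑ a : Fin s, j a * (n + 1) ^ ((a : ℕ) + 1) :=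
  Matrix.natDegree_det_of_X_pow fun _ => vdmDet_exponent_lt hn hj

theorem vandermonde_monomial_det_general (K : Type*) [Field K] (n s : ℕ)
    (hs : 0 < s) (hsn : s ≤ n) (j j' : Fin s → ℕ)
    (hj : StrictMono j) (hj' : StrictMono j')
    (hjn : ∀ a, j a ≤ n)
    (hjn' : ∀ a, j' a ≤ n) :
    vdmDet K n s j ≠ 0 ∧
    (vdmDet K n s j).natDegree = ∑ a : Fin s, j a * (n + 1) ^ ((a : ℕ) + 1) ∧
    (vdmDet K n s j).natDegree < (n + 1) ^ (s + 1) ∧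
    (j ≠ j' → (vdmDet K n s j).natDegree ≠ (vdmDet K n s j').natDegree) := by
  have hn : 0 < n := hs.trans_le hsn
  have hdeg := natDegree_vdmDet K hn hj
  have hdigits : ∀ a, j a < n + 1 := fun a => Nat.lt_succ_of_le (hjn a)
  refine ⟨(monic_vdmDet K hn hj).ne_zero, hdeg, ?_, fun hne heq => hne ?_⟩
  · rw [hdeg, Nat.sum_mul_pow_succ, pow_succ']
    exact Nat.mul_lt_mul_of_pos_left (Nat.sum_mul_pow_lt_pow hdigits) (by omega)
  · rw [hdeg, natDegree_vdmDet K hn hj', Nat.sum_mul_pow_succ, Nat.sum_mul_pow_succ] at heq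
    exact Nat.eq_of_sum_mul_pow_eq hdigits (fun a => Nat.lt_succ_of_le (hjn' a))
      (Nat.eq_of_mul_eq_mul_left (by omega) heq)

theorem vandermonde_monomial_det (K : Type*) [Field K] (n s : ℕ)
    (hs : 0 < s) (hsn : s ≤ n) (j j' : Fin s → ℕ)
    (hj : StrictMono j) (hj' : StrictMono j')
    (hj1 : ∀ a, 1 ≤ j a) (hjn : ∀ a, j a ≤ n)
    (hj1' : ∀ a, 1 ≤ j' a) (hjn' : ∀ a, j' a ≤ n) :
    vdmDet K n s j ≠ 0 ∧
    (vdmDet K n s j).natDegree = ∑ a : Fin s, j a * (n + 1) ^ ((a : ℕ) + 1) ∧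
    (vdmDet K n s j).natDegree < (n + 1) ^ (s + 1) ∧
    (j ≠ j' → (vdmDet K n s j).natDegree ≠ (vdmDet K n s j').natDegree) :=
  vandermonde_monomial_det_general K n s hs hsn j j' hj hj' hjn hjn'
end
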